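/- arXiv:1512.07862 — 8 statements merged into one kernel-verified Lean document; each statement's English description precedes it below -/
import Mathlib

section
/- The operation cl_S defined by u ∈ N^{cl_S}_M iff for all s ∈ S, s ⊗ u ∈ im(S ⊗ N → S ⊗ M), is a closure operation: it satisfies extension (N ⊆ N^{cl_S}_M), idempotence ((N^{cl_S}_M)^{cl_S}_M = N^{cl_S}_M), and order-preservation (N ⊆ N' implies N^{cl_S}_M ⊆ N'^{cl_S}_M). -/
/-!
Extension and monotonicity are immediate from the definition. For idempotence, the image of
`S ⊗ N^{cl}` in `S ⊗ M` is spanned by the pure tensors `s ⊗ u` with `u ∈ N^{cl}`, and each of these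
lies in the image of `S ⊗ N` by the definition of `N^{cl}`.
-/

open TensorProduct

variable {R S M : Type*} [CommRing R] [AddCommGroup S] [Module R S]
  [AddCommGroup M] [Module R M]

/-- The module closure `cl_S`: `u ∈ N^{cl_S}_M` iff for all `s ∈ S`,
`s ⊗ u ∈ im (S ⊗ N → S ⊗ M)`. -/
def modClosure (S : Type*) [AddCommGroup S] [Module R S] (N : Submodule R M) :
    Submodule R M where
  carrier := {u : M | ∀ s : S,
    s ⊗ₜ[R] u ∈ LinearMap.range (LinearMap.lTensor S N.subtype)}
  zero_mem' := fun s => by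
    rw [tmul_zero]; exact zero_mem _
  add_mem' := fun {a b} ha hb s => by
    rw [tmul_add]; exact add_mem (ha s) (hb s)
  smul_mem' := fun r u hu s => by
    rw [tmul_smul]; exact Submodule.smul_mem _ r (hu s)

theorem le_modClosure (N : Submodule R M) : N ≤ modClosure S N :=
  fun u hu s => ⟨s ⊗ₜ[R] (⟨u, hu⟩ : N), rfl⟩

theorem modClosure_mono {N N' : Submodule R M} (h : N ≤ N') :
    modClosure S N ≤ modClosure S N' := by
  intro u hu s
  obtain ⟨x, hx⟩ := hu s
  refine ⟨LinearMap.lTensor S (Submodule.inclusion h) x, ?_⟩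
  rw [← LinearMap.comp_apply, ← LinearMap.lTensor_comp, Submodule.subtype_comp_inclusion, hx]

theorem range_lTensor_modClosure_subtype_le (N : Submodule R M) :
    LinearMap.range (LinearMap.lTensor S (modClosure S N).subtype) ≤
      LinearMap.range (LinearMap.lTensor S N.subtype) := by
  rw [LinearMap.range_eq_map, ← TensorProduct.span_tmul_eq_top, Submodule.map_span,
    Submodule.span_le]
  rintro _ ⟨_, ⟨s, u, rfl⟩, rfl⟩
  exact u.2 s

theorem modClosure_modClosure (N : Submodule R M) :
    modClosure S (modClosure S N) = modClosure S N :=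
  le_antisymm (fun _ hu s => range_lTensor_modClosure_subtype_le N (hu s)) (le_modClosure _)

theorem stmt1_general :
    (∀ N : Submodule R M, N ≤ modClosure S N) ∧
    (∀ N : Submodule R M, modClosure S (modClosure S N) = modClosure S N) ∧
    (∀ N N' : Submodule R M, N ≤ N' → modClosure S N ≤ modClosure S N') :=
  ⟨le_modClosure, modClosure_modClosure, fun _ _ => modClosure_mono⟩

/-- `cl_S` is a closure operation: extension, idempotence, and
order-preservation. -/
theorem stmt1 [IsNoetherianRing R] [Module.Finite R M] :
    (∀ N : Submodule R M, N ≤ modClosure S N) ∧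
    (∀ N : Submodule R M, modClosure S (modClosure S N) = modClosure S N) ∧
    (∀ N N' : Submodule R M, N ≤ N' → modClosure S N ≤ modClosure S N') :=
  stmt1_general
end

section
/- (Persistence for change of rings) Suppose R → S is a ring homomorphism, B is an R-algebra, C is an S-algebra, and there is a commutative square with maps R → B, R → S, S → C, B → C. If N ⊆ M are finitely generated R-modules and u ∈ N^{cl_B}_M, then 1 ⊗ u ∈ (im(S ⊗_R N → S ⊗_R M))^{cl_C}_{S ⊗_R M}. -/
open TensorProduct

/-- Persistence for change of rings: given a commutative square
`R → B`, `R → S`, `S → C`, `B → C` (with `C` an `S`-algebra and the composites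
`R → B → C` and `R → S → C` equal, encoded by `IsScalarTower R S C` and an
`R`-algebra map `g : B →ₐ[R] C`), if `u ∈ N^{cl_B}_M` then
`1 ⊗ u ∈ (im (S ⊗_R N → S ⊗_R M))^{cl_C}_{S ⊗_R M}`. -/
theorem stmt2 {R S B C M : Type*} [CommRing R] [CommRing S] [CommRing B] [CommRing C]
    [Algebra R S] [Algebra R B] [Algebra R C] [Algebra S C] [IsScalarTower R S C]
    (g : B →ₐ[R] C)
    [AddCommGroup M] [Module R M] [Module.Finite R M]
    (N : Submodule R M) (u : M)
    (hu : (1 : B) ⊗ₜ[R] u ∈ LinearMap.range (N.subtype.baseChange B)) :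
    (1 : C) ⊗ₜ[S] ((1 : S) ⊗ₜ[R] u) ∈
      LinearMap.range
        ((LinearMap.range (N.subtype.baseChange S)).subtype.baseChange C) := by
  obtain ⟨x, hx⟩ := hu
  -- Step 1: push the witness from `B ⊗ N` to `C ⊗ N` along `g`.
  set y : C ⊗[R] N := g.toLinearMap.rTensor N x with hy
  have comm : (((N.subtype.baseChange C).restrictScalars R).comp
      (g.toLinearMap.rTensor N)) =
      ((g.toLinearMap.rTensor M).comp ((N.subtype.baseChange B).restrictScalars R)) := by
    ext b n
    simp
  have hyC : N.subtype.baseChange C y = (1 : C) ⊗ₜ[R] u := by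
    have := LinearMap.congr_fun comm x
    simp only [LinearMap.comp_apply, LinearMap.restrictScalars_apply] at this
    rw [hy, this, hx]
    simp
  -- Step 2: transfer across the cancellation isomorphism.
  set e : C ⊗[S] (S ⊗[R] N) ≃ₗ[C] C ⊗[R] N :=
    AlgebraTensorModule.cancelBaseChange R S C C N with he
  refine ⟨((N.subtype.baseChange S).rangeRestrict.baseChange C) (e.symm y), ?_⟩
  have key : (((LinearMap.range (N.subtype.baseChange S)).subtype.baseChange C).comp
        ((N.subtype.baseChange S).rangeRestrict.baseChange C)).comp e.symm.toLinearMap =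
      ((AlgebraTensorModule.cancelBaseChange R S C C M).symm.toLinearMap).comp
        (N.subtype.baseChange C) := by
    ext c
    simp [he]
  have := LinearMap.congr_fun key y
  simp only [LinearMap.comp_apply, LinearEquiv.coe_coe] at this
  rw [this, hyC]
  simp
end

section
/- Let R be a domain, A a torsion-free R-algebra, M a finitely generated R-module, and α : R → M an injective R-module homomorphism. Then the induced map id_A ⊗ α : A → A ⊗_R M is injective. -/
/-!
Over the fraction field `K` of `R`, the vector `α 1` survives in `K ⊗ M`, so some `K`-linear
functional on `K ⊗ M` is nonzero on it. Since `M` is finitely presented, clearing denominators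
turns this functional into an `R`-linear `φ : M → R` with `d := φ (α 1) ≠ 0`. Then
`φ ∘ α = d • id`, so after base change `(id_A ⊗ φ) ∘ (id_A ⊗ α)` is multiplication by `d` on
`A ⊗ R ≅ A`, which is injective because `A` is torsion-free.
-/

open TensorProduct
open scoped nonZeroDivisors

theorem Module.exists_apply_ne_zero_of_notMem_torsion {R M : Type*} [CommRing R] [IsDomain R]
    [AddCommGroup M] [Module R M] [Module.FinitePresentation R M] {m : M}
    (hm : m ∉ Submodule.torsion R M) : ∃ φ : M →ₗ[R] R, φ m ≠ 0 := by
  let K := FractionRing R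
  let f := LocalizedModule.mkLinearMap R⁰ M
  have hfm : f m ≠ 0 := by
    rwa [Ne, IsLocalizedModule.eq_zero_iff R⁰ f, ← Submodule.mem_torsion_iff]
  obtain ⟨ψ, hψ⟩ := Module.Projective.exists_dual_ne_zero K hfm
  obtain ⟨φ, s, hφ⟩ := Module.FinitePresentation.exists_lift_of_isLocalizedModule R⁰
    (Algebra.linearMap R K) (ψ.restrictScalars R ∘ₗ f)
  refine ⟨φ, fun h => hψ ?_⟩
  have hs : (0 : K) = s • ψ (f m) := by simpa [h] using congr($hφ m)
  exact (smul_eq_zero.1 hs.symm).resolve_left (nonZeroDivisors.coe_ne_zero s)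

theorem LinearMap.baseChange_injective_of_apply_ne_zero {R A M : Type*} [CommRing R]
    [CommRing A] [Algebra R A] [NoZeroSMulDivisors R A] [AddCommGroup M] [Module R M]
    (α : R →ₗ[R] M) {φ : M →ₗ[R] R} (hφ : φ (α 1) ≠ 0) :
    Function.Injective (α.baseChange A) := by
  have hcomp : φ ∘ₗ α = φ (α 1) • LinearMap.id := LinearMap.ext_ring (by simp)
  refine Function.Injective.of_comp (f := LinearMap.baseChange A φ) ?_
  rw [← LinearMap.coe_comp, ← LinearMap.baseChange_comp, hcomp, LinearMap.baseChange_smul,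
    LinearMap.baseChange_id]
  refine (injective_iff_map_eq_zero _).2 fun x hx => ?_
  have hd : φ (α 1) • TensorProduct.rid R A x = 0 := by
    rw [← map_smul, show φ (α 1) • x = 0 from hx, map_zero]
  exact (TensorProduct.rid R A).map_eq_zero_iff.1
    ((eq_zero_or_eq_zero_of_smul_eq_zero hd).resolve_left hφ)

/-- if `R` is a domain, `A` a torsion-free `R`-algebra, `M` a finitely
generated `R`-module and `α : R → M` injective, then `id_A ⊗ α : A ≅ A ⊗ R → A ⊗ M`
is injective. -/
theorem stmt3 {R A M : Type*} [CommRing R] [IsDomain R] [IsNoetherianRing R]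
    [CommRing A] [Algebra R A] [NoZeroSMulDivisors R A]
    [AddCommGroup M] [Module R M] [Module.Finite R M]
    (α : R →ₗ[R] M) (hα : Function.Injective α) :
    Function.Injective (α.baseChange A) := by
  have : Module.FinitePresentation R M := Module.finitePresentation_of_finite R M
  have hα1 : α 1 ∉ Submodule.torsion R M := by
    rintro ⟨r, hr⟩
    refine nonZeroDivisors.coe_ne_zero r (hα ?_)
    rw [map_zero, ← mul_one (r : R), ← smul_eq_mul, map_smul]
    exact hr
  obtain ⟨φ, hφ⟩ := Module.exists_apply_ne_zero_of_notMem_torsion hα1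
  exact α.baseChange_injective_of_apply_ne_zero hφ
end

section
/- Let R be a ring, M an R-module, and e ∈ M. Then the module Sym^{≤2}(M)/(1−e)Sym^{≤1}(M) is isomorphic to Sym²(M), where Sym^{≤k}(M) = R ⊕ M ⊕ ... ⊕ Sym^k(M) is the truncation of the symmetric algebra and (1−e) acts by multiplication in Sym(M). More precisely, (1−e)Sym^{≤1}(M) ∩ Sym²(M) = 0 and every element of Sym^{≤2}(M) is congruent modulo (1−e)Sym^{≤1}(M) to an element of Sym²(M). -/
open TensorProduct

variable (R M : Type*) [CommRing R] [AddCommGroup M] [Module R M]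

/-- The commutativity relation on the tensor algebra. -/
inductive SymAlgRel : TensorAlgebra R M → TensorAlgebra R M → Prop
  | comm (m n : M) : SymAlgRel (TensorAlgebra.ι R m * TensorAlgebra.ι R n)
      (TensorAlgebra.ι R n * TensorAlgebra.ι R m)

/-- The symmetric algebra `Sym(M)`, as the quotient of the tensor algebra by the
commutativity relations. -/
abbrev SymmAlg := RingQuot (SymAlgRel R M)

/-- The canonical inclusion `M → Sym(M)`. -/
noncomputable def symι : M →ₗ[R] SymmAlg R M :=
  (RingQuot.mkAlgHom R (SymAlgRel R M)).toLinearMap ∘ₗ TensorAlgebra.ι R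

/-- The submodule of `Sym(M)` spanned by the image of `M` (the degree-one part). -/
noncomputable def symV : Submodule R (SymmAlg R M) :=
  Submodule.span R (Set.range (symι R M))

/-!
Write `V = symV R M` and `W = (1 - e)(R ⊕ V)`. The algebra map `Sym(M) → R ⊕ M` onto the trivial
square-zero extension kills `V²`, is injective on `R ⊕ V` and sends `1 - e` to the unit `(1, -e)`,
so `W ∩ V² = 0`. Conversely `v ≡ e v` and `1 ≡ e` modulo `W`, so `(R ⊕ V)² = R + V + V²` lies in
`W + V²`. Thus `V²` is a complement of `W` inside `Sym^{≤2}(M)`.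
-/

namespace Submodule

section Algebra

variable {R A : Type*} [CommSemiring R] [Ring A] [Algebra R A]

theorem one_sup_sq (V : Submodule R A) : (1 ⊔ V) ^ 2 = 1 ⊔ V ⊔ V ^ 2 := by
  rw [sq, mul_sup, sup_mul, sup_mul, one_mul, one_mul, mul_one, ← sq, ← sup_assoc,
    sup_assoc 1 V V, sup_idem]

theorem one_sup_sq_le_map_mulLeft_one_sub_sup_sq {V : Submodule R A} {e : A} (he : e ∈ V) :
    (1 ⊔ V) ^ 2 ≤ (1 ⊔ V).map (LinearMap.mulLeft R (1 - e)) ⊔ V ^ 2 := by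
  set W := (1 ⊔ V).map (LinearMap.mulLeft R (1 - e))
  have mulLeft_mem {x : A} (hx : x ∈ 1 ⊔ V) : (1 - e) * x ∈ W := mem_map_of_mem hx
  have hV : V ≤ W ⊔ V ^ 2 := fun v hv => by
    have hev : e * v ∈ V ^ 2 := by rw [sq]; exact mul_mem_mul he hv
    simpa [sub_mul] using add_mem (mem_sup_left (mulLeft_mem (mem_sup_right hv)))
      (mem_sup_right hev : e * v ∈ W ⊔ V ^ 2)
  have h1 : 1 ≤ W ⊔ V ^ 2 := one_le.2 <| by
    simpa using add_mem (mem_sup_left (mulLeft_mem (mem_sup_left (one_le.1 le_rfl))))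
      (hV he)
  rw [one_sup_sq]
  exact sup_le (sup_le h1 hV) le_sup_right

theorem disjoint_map_mulLeft {B : Type*} [Ring B] [Algebra R B] (φ : A →ₐ[R] B) {a : A}
    (ha : IsUnit (φ a)) {S T : Submodule R A} (hS : Disjoint S (LinearMap.ker φ.toLinearMap))
    (hT : T ≤ LinearMap.ker φ.toLinearMap) : Disjoint (S.map (LinearMap.mulLeft R a)) T := by
  rw [disjoint_def]
  rintro _ ⟨y, hy, rfl⟩ hyT
  have hφy : φ y = 0 := by
    have : φ a * φ y = 0 := by simpa using hT hyT
    exact (ha.mul_right_eq_zero).1 this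
  simp [disjoint_def.1 hS y hy hφy]

end Algebra

variable {R N : Type*} [Ring R] [AddCommGroup N] [Module R N]

noncomputable def quotientEquivOfLeSup {P Q W : Submodule R N} (hQP : Q ≤ P)
    (hWQ : Disjoint W Q) (hP : P ≤ W ⊔ Q) : (P ⧸ W.comap P.subtype) ≃ₗ[R] Q :=
  .symm <| .ofBijective ((W.comap P.subtype).mkQ ∘ₗ inclusion hQP) <| by
    constructor
    · intro v w hvw
      simp only [LinearMap.comp_apply, mkQ_apply, Quotient.eq, mem_comap, subtype_apply,
        AddSubgroupClass.coe_sub, coe_inclusion] at hvw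
      exact Subtype.ext <| sub_eq_zero.1 <| disjoint_def.1 hWQ _ hvw (sub_mem v.2 w.2)
    · intro q
      obtain ⟨⟨x, hx⟩, rfl⟩ := Quotient.mk_surjective _ q
      obtain ⟨w, hw, y, hy, rfl⟩ := mem_sup.1 (hP hx)
      refine ⟨⟨y, hy⟩, ?_⟩
      simpa [Quotient.eq] using neg_mem hw

end Submodule

section SymmAlg

variable {R M}

noncomputable def symToTrivSqZeroExt [Module Rᵐᵒᵖ M] [IsCentralScalar R M] :
    SymmAlg R M →ₐ[R] TrivSqZeroExt R M :=
  RingQuot.liftAlgHom R ⟨TensorAlgebra.toTrivSqZeroExt, by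
    rintro _ _ ⟨m, n⟩
    simp [TrivSqZeroExt.inr_mul_inr]⟩

variable [Module Rᵐᵒᵖ M] [IsCentralScalar R M]

@[simp]
theorem symToTrivSqZeroExt_symι (m : M) : symToTrivSqZeroExt (symι R M m) = .inr m := by
  simp [symToTrivSqZeroExt, symι, RingQuot.liftAlgHom_mkAlgHom_apply]

theorem symV_sq_le_ker_symToTrivSqZeroExt :
    symV R M ^ 2 ≤ LinearMap.ker (symToTrivSqZeroExt (R := R) (M := M)).toLinearMap := by
  rw [sq, symV, Submodule.span_mul_span, Submodule.span_le]
  rintro _ ⟨_, ⟨m, rfl⟩, _, ⟨n, rfl⟩, rfl⟩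
  simp [TrivSqZeroExt.inr_mul_inr]

theorem disjoint_one_sup_symV_ker_symToTrivSqZeroExt :
    Disjoint (1 ⊔ symV R M)
      (LinearMap.ker (symToTrivSqZeroExt (R := R) (M := M)).toLinearMap) := by
  rw [Submodule.disjoint_def]
  intro x hx hx0
  obtain ⟨_, ⟨r, rfl⟩, _, hy, rfl⟩ := Submodule.mem_sup.1 hx
  rw [symV, ← LinearMap.coe_range, Submodule.span_eq] at hy
  obtain ⟨n, rfl⟩ := hy
  obtain ⟨rfl, rfl⟩ : r = 0 ∧ n = 0 := by
    simpa [TrivSqZeroExt.ext_iff, TrivSqZeroExt.algebraMap_eq_inl] using hx0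
  simp

theorem isUnit_symToTrivSqZeroExt_one_sub_symι (e : M) :
    IsUnit (symToTrivSqZeroExt (1 - symι R M e)) := by
  rw [map_sub, map_one, symToTrivSqZeroExt_symι]
  exact isUnit_iff_exists_inv.2
    ⟨1 + .inr e, by simp [mul_add, sub_mul, TrivSqZeroExt.inr_mul_inr]⟩

end SymmAlg

theorem disjoint_map_mulLeft_one_sub_symι_symV_sq (e : M) :
    Disjoint ((1 ⊔ symV R M).map (LinearMap.mulLeft R (1 - symι R M e))) (symV R M ^ 2) := by
  let : Module Rᵐᵒᵖ M := Module.compHom _ ((RingHom.id R).fromOpposite mul_comm)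
  have : IsCentralScalar R M := ⟨fun _ _ => rfl⟩
  exact Submodule.disjoint_map_mulLeft _ (isUnit_symToTrivSqZeroExt_one_sub_symι e)
    disjoint_one_sup_symV_ker_symToTrivSqZeroExt symV_sq_le_ker_symToTrivSqZeroExt

/-- for `e ∈ M`, `Sym^{≤2}(M)/(1-e)Sym^{≤1}(M) ≅ Sym²(M)`.  Here
`Sym^{≤n}(M) = (1 ⊔ V)^n` (with `V` the degree-one part), `Sym²(M) = V^2`, and
`(1-e)Sym^{≤1}(M)` is the image of `Sym^{≤1}(M)` under multiplication by `1 - e`.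
More precisely, `(1-e)Sym^{≤1}(M) ∩ Sym²(M) = 0`, and every element of `Sym^{≤2}(M)`
is congruent modulo `(1-e)Sym^{≤1}(M)` to an element of `Sym²(M)`. -/
theorem stmt5 (e : M) :
    (Submodule.map (LinearMap.mulLeft R ((1 : SymmAlg R M) - symι R M e))
        ((1 ⊔ symV R M : Submodule R (SymmAlg R M)))) ⊓ (symV R M ^ 2) = ⊥ ∧
    (∀ x ∈ ((1 ⊔ symV R M : Submodule R (SymmAlg R M)) ^ 2), ∃ y ∈ symV R M ^ 2,
      x - y ∈ Submodule.map (LinearMap.mulLeft R ((1 : SymmAlg R M) - symι R M e))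
        ((1 ⊔ symV R M : Submodule R (SymmAlg R M)))) ∧
    Nonempty
      ((@HasQuotient.Quotient _ _
          (@Submodule.hasQuotient R ↥((1 ⊔ symV R M : Submodule R (SymmAlg R M)) ^ 2) _ _ _)
          (Submodule.comap ((1 ⊔ symV R M : Submodule R (SymmAlg R M)) ^ 2).subtype
            (Submodule.map (LinearMap.mulLeft R ((1 : SymmAlg R M) - symι R M e))
              (1 ⊔ symV R M : Submodule R (SymmAlg R M))))) ≃ₗ[R]
        ↥(symV R M ^ 2)) := by
  have hdisj := disjoint_map_mulLeft_one_sub_symι_symV_sq R M e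
  have hle := Submodule.one_sup_sq_le_map_mulLeft_one_sub_sup_sq
    (Submodule.subset_span (Set.mem_range_self e) : symι R M e ∈ symV R M)
  have hsq : symV R M ^ 2 ≤ (1 ⊔ symV R M) ^ 2 := by
    rw [Submodule.one_sup_sq]; exact le_sup_right
  refine ⟨disjoint_iff.1 hdisj, fun x hx => ?_, ⟨Submodule.quotientEquivOfLeSup hsq hdisj hle⟩⟩
  obtain ⟨w, hw, y, hy, rfl⟩ := Submodule.mem_sup.1 (hle hx)
  exact ⟨y, hy, by rwa [add_sub_cancel_right]⟩
end

section
/- Let R be a reduced commutative ring of prime characteristic p, M a finitely generated R-module, α : R → M an injective map with α(1) = u. Suppose there exist c ∈ R not in any minimal prime (c ∈ R°) and, for all sufficiently large e, maps γ_e : F^e(M) → R with γ_e ∘ F^e(α) = c·id_R. Then for d = c² and the map α' : R → Sym²(M), 1 ↦ u ⊗ u, there exist for all sufficiently large e maps δ_e : F^e(Sym²(M)) → R with δ_e ∘ F^e(α') = d·id_R. -/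
open TensorProduct

section Frob

variable (R : Type*) [CommRing R] (p : ℕ) [ExpChar R p]

/-- `R` viewed as an `R`-algebra via the `e`-th iterate of Frobenius
(the Peskine–Szpiro functor `F^e` is base change along this algebra structure). -/
def FrobTwist (p e : ℕ) : Type _ := R

instance (p e : ℕ) : CommRing (FrobTwist R p e) := inferInstanceAs (CommRing R)

noncomputable instance (e : ℕ) : Algebra R (FrobTwist R p e) :=
  RingHom.toAlgebra (show R →+* FrobTwist R p e from iterateFrobenius R p e)

/-- The identity of underlying sets `R → FrobTwist R p e`. -/
def FrobTwist.of (e : ℕ) (x : R) : FrobTwist R p e := x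

end Frob

section Sym

variable (R M : Type*) [CommRing R] [AddCommGroup M] [Module R M]

/-- The symmetry relations in `M ⊗ M`. -/
def symRel : Submodule R (M ⊗[R] M) :=
  Submodule.span R {x | ∃ m n : M, x = m ⊗ₜ[R] n - n ⊗ₜ[R] m}

/-- The second symmetric power `Sym²(M)`. -/
abbrev Sym2Mod := (M ⊗[R] M) ⧸ symRel R M

end Sym

/-- tight closure satisfies the Algebra Axiom, via the characterization of
`*`-phantom extensions: if `R` is reduced of prime characteristic `p`, `α : R → M` is
injective with `α 1 = u`, `c ∈ R°`, and for all `e ≫ 0` there are maps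
`γ_e : F^e(M) → R` with `γ_e ∘ F^e(α) = c·id`, then for `d = c²` and
`α' : R → Sym²(M)`, `1 ↦ u ⊗ u`, there are for all `e ≫ 0` maps
`δ_e : F^e(Sym²(M)) → R` with `δ_e ∘ F^e(α') = d·id`. -/
theorem stmt7 {R M : Type*} [CommRing R] [IsReduced R] (p : ℕ) [Fact p.Prime]
    [CharP R p] [ExpChar R p] [AddCommGroup M] [Module R M] [Module.Finite R M]
    (α : R →ₗ[R] M) (hα : Function.Injective α) (u : M) (hu : α 1 = u)
    (c : R) (hc : ∀ P ∈ minimalPrimes R, c ∉ P)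
    (hγ : ∃ E : ℕ, ∀ e ≥ E,
      ∃ γ : (FrobTwist R p e ⊗[R] M) →ₗ[FrobTwist R p e] FrobTwist R p e,
        γ ((1 : FrobTwist R p e) ⊗ₜ[R] u) = FrobTwist.of R p e c) :
    ∃ E : ℕ, ∀ e ≥ E,
      ∃ δ : (FrobTwist R p e ⊗[R] Sym2Mod R M) →ₗ[FrobTwist R p e] FrobTwist R p e,
        δ ((1 : FrobTwist R p e) ⊗ₜ[R] ((symRel R M).mkQ (u ⊗ₜ[R] u))) =
          FrobTwist.of R p e (c ^ 2) := by
  obtain ⟨E, hE⟩ := hγ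
  refine ⟨E, fun e he => ?_⟩
  obtain ⟨γ, hγe⟩ := hE e he
  set S := FrobTwist R p e
  -- g : M →ₗ[R] S, m ↦ γ (1 ⊗ m)
  let g : M →ₗ[R] S := (γ.restrictScalars R) ∘ₗ (TensorProduct.mk R S M 1)
  have hg : g u = FrobTwist.of R p e c := hγe
  -- bilinear map (m, n) ↦ g m * g n
  let B : M →ₗ[R] M →ₗ[R] S := (LinearMap.mul R S).compl₁₂ g g
  let f0 : M ⊗[R] M →ₗ[R] S := TensorProduct.lift B
  have hker : symRel R M ≤ LinearMap.ker f0 := by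
    rw [symRel, Submodule.span_le]
    rintro x ⟨m, n, rfl⟩
    simp only [SetLike.mem_coe, LinearMap.mem_ker, map_sub, f0, TensorProduct.lift.tmul]
    simp [B, mul_comm]
  let f : Sym2Mod R M →ₗ[R] S := (symRel R M).liftQ f0 hker
  refine ⟨f.liftBaseChange S, ?_⟩
  have : f.liftBaseChange S (1 ⊗ₜ[R] (symRel R M).mkQ (u ⊗ₜ[R] u))
      = f ((symRel R M).mkQ (u ⊗ₜ[R] u)) := LinearMap.liftBaseChange_one_tmul S f _
  rw [this]
  show f0 (u ⊗ₜ[R] u) = _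
  have : f0 (u ⊗ₜ[R] u) = g u * g u := rfl
  rw [this, hg]
  show c * c = c ^ 2
  ring
end

section
/- Let R be a domain, A a torsion-free R-algebra, M a finitely generated R-module, α : R → M injective with α(1) = u. If there is an A-module map γ : A ⊗_R M → A with γ ∘ (id_A ⊗ α) = id_A, then there is an A-module map λ : A ⊗_R Sym²(M) → A with λ ∘ (id_A ⊗ α') = id_A, where α' : R → Sym²(M) sends 1 to u ⊗ u. -/
open TensorProduct

section Aux

variable {R A M : Type*} [CommRing R] [CommRing A] [Algebra R A]
  [AddCommGroup M] [Module R M]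

/-- `m ↦ γ (1 ⊗ m)` as an `R`-linear map. -/
noncomputable def auxF (γ : (A ⊗[R] M) →ₗ[A] A) : M →ₗ[R] A :=
  (γ.restrictScalars R).comp
    ((TensorProduct.mk R A M) (1 : A))

@[simp] lemma auxF_apply (γ : (A ⊗[R] M) →ₗ[A] A) (m : M) :
    auxF γ m = γ ((1 : A) ⊗ₜ[R] m) := rfl

/-- The bilinear map `(m, n) ↦ γ(1⊗m) * γ(1⊗n)`. -/
noncomputable def auxB (γ : (A ⊗[R] M) →ₗ[A] A) : M →ₗ[R] M →ₗ[R] A :=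
  ((LinearMap.mul R A).comp (auxF γ)).compl₂ (auxF γ)

@[simp] lemma auxB_apply (γ : (A ⊗[R] M) →ₗ[A] A) (m n : M) :
    auxB γ m n = γ ((1 : A) ⊗ₜ[R] m) * γ ((1 : A) ⊗ₜ[R] n) := rfl

/-- The induced map on `M ⊗ M`. -/
noncomputable def auxG (γ : (A ⊗[R] M) →ₗ[A] A) : (M ⊗[R] M) →ₗ[R] A :=
  TensorProduct.lift (auxB γ)

@[simp] lemma auxG_tmul (γ : (A ⊗[R] M) →ₗ[A] A) (m n : M) :
    auxG γ (m ⊗ₜ[R] n) = γ ((1 : A) ⊗ₜ[R] m) * γ ((1 : A) ⊗ₜ[R] n) := rfl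

lemma auxG_symRel (γ : (A ⊗[R] M) →ₗ[A] A) : symRel R M ≤ LinearMap.ker (auxG γ) := by
  rw [symRel, Submodule.span_le]
  rintro x ⟨m, n, rfl⟩
  simp [mul_comm]

end Aux

/-- torsion-free algebra closures satisfy the Algebra Axiom via the
splitting characterization of phantom extensions: if `R` is a Noetherian domain, `A` a
torsion-free `R`-algebra, `α : R → M` injective with `α 1 = u`, and
`γ : A ⊗ M → A` satisfies `γ ∘ (id_A ⊗ α) = id_A`, then there is
`λ : A ⊗ Sym²(M) → A` with `λ ∘ (id_A ⊗ α') = id_A`, where `α' : 1 ↦ u ⊗ u`. -/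
theorem stmt8 {R A M : Type*} [CommRing R] [IsDomain R] [IsNoetherianRing R]
    [CommRing A] [Algebra R A] [NoZeroSMulDivisors R A]
    [AddCommGroup M] [Module R M] [Module.Finite R M]
    (α : R →ₗ[R] M) (hα : Function.Injective α) (u : M) (hu : α 1 = u)
    (γ : (A ⊗[R] M) →ₗ[A] A) (hγ : ∀ a : A, γ (a ⊗ₜ[R] u) = a) :
    ∃ lam : (A ⊗[R] Sym2Mod R M) →ₗ[A] A,
      ∀ a : A, lam (a ⊗ₜ[R] ((symRel R M).mkQ (u ⊗ₜ[R] u))) = a := by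
  refine ⟨LinearMap.liftBaseChange A ((symRel R M).liftQ (auxG γ) (auxG_symRel γ)), fun a => ?_⟩
  have h : ((symRel R M).liftQ (auxG γ) (auxG_symRel γ)) ((symRel R M).mkQ (u ⊗ₜ[R] u))
      = auxG γ (u ⊗ₜ[R] u) := rfl
  rw [LinearMap.liftBaseChange_tmul, h, auxG_tmul, hγ 1, mul_one, smul_eq_mul, mul_one]
end

section
/- Let R be a local ring with maximal ideal m containing p, with R/pR reduced, and let α : R → M be a map of R-modules such that the induced map α̅ : R/pR → M/pM is injective. Then for all e ≥ 0, the map F^e(α̅) : F^e(R/pR) → F^e(M/pM) is injective, where F^e is the e-th Frobenius functor over R/pR. -/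
/-!
Put `S = R/pR` and `N = M/pM`. Write an element of `F^e(S) ⊗ S` as `a ⊗ 1` and suppose
`a ⊗ α̅(1) = 0` in `F^e(S) ⊗ N`. Since `S` is reduced, it suffices to show that `a` lies in every minimal prime `P`. The
localization `S_P` is a field and `α̅(1)` survives in `N_P` by injectivity, so some `S`-linear
`g : N → S_P` has `g(α̅(1)) = 1`. The map `a ⊗ y ↦ a · g(y)^(p^e)` is well defined on
`F^e(S) ⊗ N` because `S_P` has characteristic `p`; evaluating it at `a ⊗ α̅(1)` gives `a = 0`
in `S_P`, i.e. `a ∈ P`.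
-/

open TensorProduct

namespace FrobTwist

variable {S : Type*} [CommRing S] (p : ℕ) [ExpChar S p] (e : ℕ)

def ringEquiv : FrobTwist S p e ≃+* S := RingEquiv.refl S

theorem ringEquiv_algebraMap (r : S) :
    ringEquiv p e (algebraMap S (FrobTwist S p e) r) = r ^ p ^ e :=
  iterateFrobenius_def p e r

variable {p e}

/-- `a ⊗ y ↦ a · g(y)^(p^e)`: balanced because `r` acts on the twist through `r^(p^e)`. -/
noncomputable def frobeniusPairing {N K : Type*} [AddCommGroup N] [Module S N] [CommRing K]
    [Algebra S K] [ExpChar K p] (g : N →ₗ[S] K) : FrobTwist S p e ⊗[S] N →+ K :=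
  liftAddHom
    (AddMonoidHom.mk' (fun a => AddMonoidHom.mk'
        (fun y => algebraMap S K (ringEquiv p e a) * g y ^ p ^ e)
        (fun y z => by rw [map_add, add_pow_expChar_pow, mul_add]))
      (fun a b => by
        ext y
        simp only [map_add, add_mul, AddMonoidHom.mk'_apply, AddMonoidHom.add_apply]))
    (fun r a y => by
      simp only [AddMonoidHom.mk'_apply, Algebra.smul_def, map_mul, ringEquiv_algebraMap,
        map_smul, mul_pow, map_pow]
      ring)

theorem frobeniusPairing_tmul {N K : Type*} [AddCommGroup N] [Module S N] [CommRing K]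
    [Algebra S K] [ExpChar K p] (g : N →ₗ[S] K) (a : FrobTwist S p e) (y : N) :
    frobeniusPairing g (a ⊗ₜ y) = algebraMap S K (ringEquiv p e a) * g y ^ p ^ e :=
  liftAddHom_tmul _ _ _ _

end FrobTwist

theorem exists_linearMap_localization_eq_one_of_mem_minimalPrimes {S N : Type*} [CommRing S]
    [IsReduced S] [AddCommGroup N] [Module S N] {P : Ideal S} [P.IsPrime]
    (hP : P ∈ minimalPrimes S) {n : N} (hn : ∀ s ∉ P, s • n ≠ 0) :
    ∃ g : N →ₗ[S] Localization.AtPrime P, g n = 1 := by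
  have : Ring.KrullDimLE 0 (Localization.AtPrime P) := .of_isLocalization _ hP _
  let : Field (Localization.AtPrime P) := Ring.KrullDimLE.isField_of_isReduced.toField
  have hn' : LocalizedModule.mk n (1 : P.primeCompl) ≠ 0 := by
    rw [← LocalizedModule.zero_mk 1, Ne, LocalizedModule.mk_eq]
    rintro ⟨s, hs⟩
    simp only [one_smul, smul_zero] at hs
    exact hn s s.2 hs
  obtain ⟨φ, hφ⟩ := Module.Projective.exists_dual_eq_one (Localization.AtPrime P) hn'
  exact ⟨(φ.restrictScalars S).comp (LocalizedModule.mkLinearMap P.primeCompl N), hφ⟩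

theorem FrobTwist.baseChange_injective {S N : Type*} [CommRing S] [IsReduced S]
    [AddCommGroup N] [Module S N] (p : ℕ) [Fact p.Prime] [CharP S p]
    (f : S →ₗ[S] N) (hf : Function.Injective f) (e : ℕ) :
    Function.Injective (f.baseChange (FrobTwist S p e)) := by
  rw [injective_iff_map_eq_zero]
  intro t ht
  obtain ⟨a, rfl⟩ := (TensorProduct.rid S (FrobTwist S p e)).symm.surjective t
  rw [TensorProduct.rid_symm_apply] at ht ⊢
  rw [LinearMap.baseChange_tmul] at ht
  suffices ha : ringEquiv p e a ∈ sInf (minimalPrimes S) by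
    rw [Ideal.sInf_minimalPrimes, Ideal.radical_bot_of_isReduced, Ideal.mem_bot,
      map_eq_zero_iff _ (ringEquiv p e).injective] at ha
    rw [ha, zero_tmul]
  refine Submodule.mem_sInf.2 fun (P : Ideal S) hP => ?_
  have : P.IsPrime := hP.1.1
  have hf1 : ∀ s ∉ P, s • f 1 ≠ 0 := fun s hs h => by
    rw [← map_smul, smul_eq_mul, mul_one, map_eq_zero_iff f hf] at h
    exact hs (h ▸ P.zero_mem)
  obtain ⟨g, hg⟩ := exists_linearMap_localization_eq_one_of_mem_minimalPrimes hP hf1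
  have : CharP (Localization.AtPrime P) p := (CharP.charP_iff_prime_eq_zero Fact.out).2 <| by
    rw [← map_natCast (algebraMap S _), CharP.cast_eq_zero, map_zero]
  have hpair := congrArg (frobeniusPairing g) ht
  rw [frobeniusPairing_tmul, hg, one_pow, mul_one, map_zero] at hpair
  rw [← IsLocalization.AtPrime.to_map_mem_maximal_iff (Localization.AtPrime P) P, hpair]
  exact zero_mem _

theorem stmt10_general {R M : Type*} [CommRing R]
    [AddCommGroup M] [Module R M]
    (p : ℕ) [Fact p.Prime]
    [IsReduced (R ⧸ Ideal.span {(p : R)})] [CharP (R ⧸ Ideal.span {(p : R)}) p]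
    (ab : (R ⧸ Ideal.span {(p : R)}) →ₗ[R ⧸ Ideal.span {(p : R)}]
      (M ⧸ (Ideal.span {(p : R)} • ⊤ : Submodule R M)))
    (hinj : Function.Injective ab) (e : ℕ) :
    Function.Injective (ab.baseChange (FrobTwist (R ⧸ Ideal.span {(p : R)}) p e)) :=
  FrobTwist.baseChange_injective p ab hinj e

/-- let `(R, m)` be a local ring with `p ∈ m`, `R/pR` reduced, and
`α : R → M` a map of `R`-modules whose reduction `α̅ : R/pR → M/pM` is injective.
Then `F^e(α̅)` is injective for all `e ≥ 0`, where `F^e` is the `e`-th Frobenius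
functor (base change along the `e`-th Frobenius of `R/pR`). -/
theorem stmt10 {R M : Type*} [CommRing R] [IsLocalRing R] [IsNoetherianRing R]
    [AddCommGroup M] [Module R M]
    (p : ℕ) [Fact p.Prime] (hp : (p : R) ∈ IsLocalRing.maximalIdeal R)
    [IsReduced (R ⧸ Ideal.span {(p : R)})] [CharP (R ⧸ Ideal.span {(p : R)}) p]
    (α : R →ₗ[R] M)
    (ab : (R ⧸ Ideal.span {(p : R)}) →ₗ[R ⧸ Ideal.span {(p : R)}]
      (M ⧸ (Ideal.span {(p : R)} • ⊤ : Submodule R M)))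
    (hab : ∀ r : R, ab (Ideal.Quotient.mk _ r) = Submodule.Quotient.mk (α r))
    (hinj : Function.Injective ab) (e : ℕ) :
    Function.Injective (ab.baseChange (FrobTwist (R ⧸ Ideal.span {(p : R)}) p e)) :=
  stmt10_general p ab hinj e
end

section
/- Let R be a domain, W a torsion-free R-module, M a finitely generated R-module, and α : R → M an injective R-module map. If the map id_W ⊗ α : W → W ⊗_R M splits (has a W-retraction as R-modules), then α is cl_W-phantom; that is, with P₁ →^d P₀ → Q → 0 a free presentation of Q = coker(α) and φ : P₁ → R the associated cocycle, for every w ∈ W the map φ_w : P₁ → W, y ↦ φ(y)·w, factors as λ_w ∘ d for some λ_w : P₀ → W. -/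
open TensorProduct

/-- let `R` be a domain, `W` a torsion-free `R`-module, `α : R → M`
injective with free presentation `P₁ →^d P₀ → Q → 0` of `Q = coker α` (encoded by the
lift `ψ : P₀ → M`, the cocycle `φ : P₁ → R` with `α ∘ φ = ψ ∘ d`, surjectivity of
`R ⊕ P₀ → M` and exactness at `P₀`).  If `id_W ⊗ α : W → W ⊗ M` splits, then `α` is
`cl_W`-phantom: for every `w ∈ W` the map `φ_w : y ↦ φ(y)·w` factors through `d`. -/
theorem stmt14 {R W M P₀ P₁ : Type*} [CommRing R] [IsDomain R] [IsNoetherianRing R]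
    [AddCommGroup W] [Module R W] [NoZeroSMulDivisors R W]
    [AddCommGroup M] [Module R M] [Module.Finite R M]
    [AddCommGroup P₀] [Module R P₀] [Module.Free R P₀] [Module.Finite R P₀]
    [AddCommGroup P₁] [Module R P₁] [Module.Free R P₁] [Module.Finite R P₁]
    (α : R →ₗ[R] M) (hα : Function.Injective α)
    (d : P₁ →ₗ[R] P₀) (ψ : P₀ →ₗ[R] M) (φ : P₁ →ₗ[R] R)
    (hcomm : α ∘ₗ φ = ψ ∘ₗ d)
    (hsurj : ∀ m : M, ∃ (r : R) (x : P₀), m = α r + ψ x)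
    (hexact : ∀ x : P₀, (∃ r : R, ψ x = α r) → ∃ y : P₁, x = d y)
    (β : (W ⊗[R] M) →ₗ[R] W) (hβ : ∀ w : W, β (w ⊗ₜ[R] α 1) = w) :
    ∀ w : W, ∃ lam : P₀ →ₗ[R] W, ∀ y : P₁, φ y • w = lam (d y) := by
  intro w
  refine ⟨β ∘ₗ ((TensorProduct.mk R W M w) ∘ₗ ψ), fun y => ?_⟩
  have h : ψ (d y) = α (φ y) := by
    have := congrArg (fun f => f y) hcomm.symm
    simpa using this
  have hα1 : α (φ y) = φ y • α 1 := by
    rw [← map_smul, smul_eq_mul, mul_one]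
  simp [h, hα1, TensorProduct.tmul_smul, ← TensorProduct.smul_tmul, map_smul, hβ w]
end
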